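/- arXiv:2309.14584 — 2 statements merged into one kernel-verified Lean document; each statement's English description precedes it below -/
import Mathlib

section
/- Let N be a positive integer and let m, n be integers. Then (1/N) · ∑_{k=0}^{N−1} cos(n(k+1/2)π/N) · cos(m(k+1/2)π/N) = (1/2)·Δ_N(m+n) + (1/2)·Δ_N(m−n). -/
/-!
By product-to-sum, the claim reduces to `∑ k < N, cos (ℓ (k + 1/2) π / N) = N Δ_N(ℓ)` for
`ℓ = m ± n`. Multiplying this sum by `2 sin (ℓπ / 2N)` makes it telescope to `sin (ℓπ) = 0`,
so it vanishes unless `2N ∣ ℓ`; and if `ℓ = 2Nj`, every term equals `cos (jπ) = (-1)^j`.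
-/

open Real Finset

/-- The aliasing function `Δ_N : ℤ → ℝ`: `Δ_N ℓ = 1` if `ℓ ≡ 0 (mod 4N)`,
`Δ_N ℓ = -1` if `ℓ ≡ 2N (mod 4N)`, and `0` otherwise. -/
noncomputable def aliasDelta (N : ℕ) (ℓ : ℤ) : ℝ :=
  if ℓ % (4 * N) = 0 then 1 else if ℓ % (4 * N) = 2 * N then -1 else 0

theorem two_mul_sin_half_mul_sum_cos (θ : ℝ) (N : ℕ) :
    2 * sin (θ / 2) * ∑ k ∈ range N, cos ((k + 1 / 2) * θ) = sin (N * θ) := by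
  have telescope (k : ℕ) :
      2 * sin (θ / 2) * cos ((k + 1 / 2) * θ) = sin ((k + 1 : ℕ) * θ) - sin (k * θ) := by
    rw [sin_sub_sin]; push_cast; ring_nf
  rw [mul_sum, sum_congr rfl fun k _ => telescope k,
    sum_range_sub (fun k : ℕ => sin (k * θ))]
  simp

theorem aliasDelta_eq_zero_of_not_dvd {N : ℕ} {ℓ : ℤ} (h : ¬ 2 * (N : ℤ) ∣ ℓ) :
    aliasDelta N ℓ = 0 := by
  have hdvd : (2 * N : ℤ) ∣ 4 * N := ⟨2, by ring⟩
  have h0 : ℓ % (4 * N) ≠ 0 := fun h0 => h (hdvd.trans (Int.dvd_of_emod_eq_zero h0))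
  have h2N : ℓ % (4 * N) ≠ 2 * N := fun h2N => h <| Int.dvd_of_emod_eq_zero <| by
    rw [← Int.emod_emod_of_dvd ℓ hdvd, h2N, Int.emod_self]
  simp [aliasDelta, h0, h2N]

theorem aliasDelta_two_mul_mul {N : ℕ} (hN : 0 < N) (j : ℤ) :
    aliasDelta N (2 * N * j) = cos (j * π) := by
  have hmod : 2 * N * j % (4 * N) = 2 * N * (j % 2) := by
    rw [show (4 * N : ℤ) = 2 * N * 2 by ring, Int.mul_emod_mul_of_pos _ _ (by positivity)]
  have hcos : cos (j * π) = cos ((j % 2 : ℤ) * π) := by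
    conv_lhs => rw [← Int.emod_add_mul_ediv j 2]
    push_cast
    rw [add_mul, show ((2 : ℝ) * (j / 2 : ℤ)) * π = (j / 2 : ℤ) * (2 * π) by ring,
      cos_add_int_mul_two_pi]
  rcases Int.emod_two_eq j with hj | hj <;> simp [aliasDelta, hmod, hj, hcos, hN.ne']

theorem sum_range_cos_int_mul_half_shift {N : ℕ} (hN : 0 < N) (ℓ : ℤ) :
    ∑ k ∈ range N, cos (ℓ * (k + 1 / 2) * π / N) = N * aliasDelta N ℓ := by
  have hN' : (N : ℝ) ≠ 0 := by positivity
  by_cases hℓ : 2 * (N : ℤ) ∣ ℓ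
  · obtain ⟨j, rfl⟩ := hℓ
    have hterm (k : ℕ) : cos ((2 * N * j : ℤ) * (k + 1 / 2) * π / N) = cos (j * π) := by
      rw [← cos_add_int_mul_two_pi (j * π) (j * k)]
      congr 1; push_cast; field_simp; ring
    rw [sum_congr rfl fun k _ => hterm k, aliasDelta_two_mul_mul hN]
    simp
  · have hsin : sin (ℓ * π / N / 2) ≠ 0 := by
      rw [Ne, sin_eq_zero_iff]
      rintro ⟨j, hj⟩
      refine hℓ ⟨j, ?_⟩
      have : (ℓ : ℝ) = 2 * N * j := by
        field_simp at hj; linarith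
      exact_mod_cast this
    have key := two_mul_sin_half_mul_sum_cos (ℓ * π / N) N
    rw [mul_div_cancel₀ _ hN', sin_int_mul_pi, mul_eq_zero, or_iff_right (by simpa using hsin)]
      at key
    rw [aliasDelta_eq_zero_of_not_dvd hℓ, mul_zero, ← key]
    congr! 2 with k
    ring

theorem stmt0 (N : ℕ) (hN : 0 < N) (m n : ℤ) :
    (1 / (N : ℝ)) *
      ∑ k ∈ Finset.range N,
        Real.cos ((n : ℝ) * ((k : ℝ) + 1 / 2) * Real.pi / N) *
          Real.cos ((m : ℝ) * ((k : ℝ) + 1 / 2) * Real.pi / N) =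
    (1 / 2) * aliasDelta N (m + n) + (1 / 2) * aliasDelta N (m - n) := by
  have product_to_sum (k : ℕ) :
      cos (n * (k + 1 / 2) * π / N) * cos (m * (k + 1 / 2) * π / N) =
        (cos ((m + n : ℤ) * (k + 1 / 2) * π / N) +
          cos ((m - n : ℤ) * (k + 1 / 2) * π / N)) / 2 := by
    set x : ℝ := (k + 1 / 2) * π / N
    rw [show ((m + n : ℤ) : ℝ) * (k + 1 / 2) * π / N = m * x + n * x by push_cast; ring,
      show ((m - n : ℤ) : ℝ) * (k + 1 / 2) * π / N = m * x - n * x by push_cast; ring,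
      show (n : ℝ) * (k + 1 / 2) * π / N = n * x by ring,
      show (m : ℝ) * (k + 1 / 2) * π / N = m * x by ring, cos_add, cos_sub]
    ring
  have hN' : (N : ℝ) ≠ 0 := by positivity
  simp_rw [product_to_sum, ← sum_div, sum_add_distrib, sum_range_cos_int_mul_half_shift hN]
  field_simp
end

section
/- Let D be a positive integer, let N_1, …, N_D be positive integers, let θ^{(i)}_{k} = (k+1/2)π/N_i, and let m = (m_1, …, m_D) and n = (n_1, …, n_D) be multi-indices of natural numbers. Then (∏_{i=1}^{D} 1/N_i) · ∑_{k_1=0}^{N_1−1} ⋯ ∑_{k_D=0}^{N_D−1} ∏_{i=1}^{D} cos(n_i θ^{(i)}_{k_i}) cos(m_i θ^{(i)}_{k_i}) = ∏_{i=1}^{D} ( (1/2)·Δ_{N_i}(m_i+n_i) + (1/2)·Δ_{N_i}(m_i−n_i) ). -/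
/-!
The grid sum factors into a product of one-dimensional sums. In one dimension,
`cos (n θ) cos (m θ) = (cos ((m + n) θ) + cos ((m - n) θ)) / 2`, and `∑ₖ cos (ℓ θₖ) = N Δ_N(ℓ)`:
if `ℓ = 2 N t` every term equals `cos (t π) = (-1) ^ t`; otherwise, with `x = ℓ π / (2 N)`,
multiplying `∑ₖ cos ((2 k + 1) x)` by `2 sin x` telescopes to `sin (2 N x) = sin (ℓ π) = 0`,
while `sin x ≠ 0`.
-/

open Real Finset

noncomputable def chebyshevAngle (N k : ℕ) : ℝ := ((k : ℝ) + 1 / 2) * π / N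

theorem two_mul_sin_mul_sum_cos_odd_mul (x : ℝ) (N : ℕ) :
    2 * sin x * ∑ k ∈ range N, cos ((2 * k + 1) * x) = sin (2 * N * x) := by
  have telescope (k : ℕ) :
      2 * sin x * cos ((2 * k + 1) * x) = sin (2 * (k + 1 : ℕ) * x) - sin (2 * k * x) := by
    have h₁ : 2 * ((k + 1 : ℕ) : ℝ) * x = (2 * k + 1) * x + x := by push_cast; ring
    have h₂ : 2 * (k : ℝ) * x = (2 * k + 1) * x - x := by ring
    rw [h₁, h₂, sin_add, sin_sub]
    ring
  simp only [mul_sum, telescope, sum_range_sub (fun k : ℕ => sin (2 * k * x)), Nat.cast_zero,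
    mul_zero, zero_mul, sin_zero, sub_zero]

theorem aliasDelta_two_mul_mul_s10 {N : ℕ} (hN : 0 < N) (t : ℤ) :
    aliasDelta N (2 * N * t) = (-1) ^ t := by
  rcases Int.even_or_odd' t with ⟨s, rfl | rfl⟩
  · have hmod : 2 * (N : ℤ) * (2 * s) % (4 * N) = 0 := by
      rw [show 2 * (N : ℤ) * (2 * s) = 4 * N * s by ring]
      exact Int.mul_emod_right _ _
    rw [aliasDelta, if_pos hmod, (even_two_mul s).neg_one_zpow]
  · have hmod : 2 * (N : ℤ) * (2 * s + 1) % (4 * N) = 2 * N := by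
      rw [show 2 * (N : ℤ) * (2 * s + 1) = 2 * N + 4 * N * s by ring, Int.add_mul_emod_self_left]
      exact Int.emod_eq_of_lt (by positivity) (by omega)
    rw [aliasDelta, if_neg (by omega), if_pos hmod, (odd_two_mul_add_one s).neg_one_zpow]

theorem cos_two_mul_mul_chebyshevAngle {N : ℕ} (hN : 0 < N) (t : ℤ) (k : ℕ) :
    cos (((2 * N * t : ℤ) : ℝ) * chebyshevAngle N k) = (-1) ^ t := by
  have harg : ((2 * N * t : ℤ) : ℝ) * chebyshevAngle N k = t * π + (t * k : ℤ) * (2 * π) := by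
    rw [chebyshevAngle]; push_cast; field_simp; ring
  rw [harg, cos_add_int_mul_two_pi, cos_int_mul_pi]

theorem sum_cos_int_mul_chebyshevAngle_of_not_dvd {N : ℕ} {ℓ : ℤ} (h : ¬ 2 * (N : ℤ) ∣ ℓ) :
    ∑ k ∈ range N, cos (ℓ * chebyshevAngle N k) = 0 := by
  obtain rfl | hN := N.eq_zero_or_pos
  · simp
  have hN' : (N : ℝ) ≠ 0 := Nat.cast_ne_zero.mpr hN.ne'
  set x : ℝ := ℓ * π / (2 * N) with hx
  have harg (k : ℕ) : ℓ * chebyshevAngle N k = (2 * k + 1) * x := by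
    rw [chebyshevAngle, hx]; field_simp
  have hsin_x : sin x ≠ 0 := by
    rw [Ne, sin_eq_zero_iff]
    rintro ⟨j, hj⟩
    refine h ⟨j, ?_⟩
    have : (ℓ : ℝ) = 2 * N * j := by rw [hx] at hj; field_simp at hj; linarith
    exact_mod_cast this
  have hsin_2Nx : sin (2 * N * x) = 0 := by
    rw [show 2 * N * x = ℓ * π by rw [hx]; field_simp]
    exact sin_int_mul_pi ℓ
  have hsum := two_mul_sin_mul_sum_cos_odd_mul x N
  rw [hsin_2Nx] at hsum
  simpa only [harg] using (mul_eq_zero.mp hsum).resolve_left (mul_ne_zero two_ne_zero hsin_x)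

theorem sum_cos_int_mul_chebyshevAngle {N : ℕ} (hN : 0 < N) (ℓ : ℤ) :
    ∑ k ∈ range N, cos (ℓ * chebyshevAngle N k) = N * aliasDelta N ℓ := by
  by_cases h : 2 * (N : ℤ) ∣ ℓ
  · obtain ⟨t, rfl⟩ := h
    simp only [cos_two_mul_mul_chebyshevAngle hN, sum_const, card_range, nsmul_eq_mul,
      aliasDelta_two_mul_mul_s10 hN]
  · rw [sum_cos_int_mul_chebyshevAngle_of_not_dvd h, aliasDelta_eq_zero_of_not_dvd h, mul_zero]

theorem chebyshev_discrete_orthogonality {N : ℕ} (hN : 0 < N) (m n : ℕ) :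
    1 / (N : ℝ) * ∑ k ∈ range N, cos (n * chebyshevAngle N k) * cos (m * chebyshevAngle N k) =
      1 / 2 * aliasDelta N (m + n) + 1 / 2 * aliasDelta N (m - n) := by
  have product_to_sum (k : ℕ) :
      cos (n * chebyshevAngle N k) * cos (m * chebyshevAngle N k) =
        1 / 2 * cos (((m + n : ℤ) : ℝ) * chebyshevAngle N k) +
          1 / 2 * cos (((m - n : ℤ) : ℝ) * chebyshevAngle N k) := by
    push_cast
    rw [add_mul, sub_mul]
    linear_combination
      (1 / 2) * two_mul_cos_mul_cos (m * chebyshevAngle N k) (n * chebyshevAngle N k)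
  have hN' : (N : ℝ) ≠ 0 := Nat.cast_ne_zero.mpr hN.ne'
  simp only [product_to_sum, sum_add_distrib, ← mul_sum, sum_cos_int_mul_chebyshevAngle hN]
  field_simp

theorem stmt10_general (D : ℕ) (N : Fin D → ℕ) (hN : ∀ i, 0 < N i)
    (m n : Fin D → ℕ) :
    (∏ i, (1 / (N i : ℝ))) *
      ∑ k ∈ Fintype.piFinset (fun i => Finset.range (N i)),
        ∏ i,
          Real.cos ((n i : ℝ) * (((k i : ℝ) + 1 / 2) * Real.pi / (N i))) *
            Real.cos ((m i : ℝ) * (((k i : ℝ) + 1 / 2) * Real.pi / (N i))) =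
    ∏ i,
      ((1 / 2) * aliasDelta (N i) ((m i : ℤ) + (n i : ℤ)) +
        (1 / 2) * aliasDelta (N i) ((m i : ℤ) - (n i : ℤ))) := by
  calc _ = ∏ i, 1 / (N i : ℝ) * ∑ k ∈ range (N i),
          cos (n i * chebyshevAngle (N i) k) * cos (m i * chebyshevAngle (N i) k) := by
        rw [prod_mul_distrib, prod_univ_sum]; rfl
    _ = _ := prod_congr rfl fun i _ => chebyshev_discrete_orthogonality (hN i) (m i) (n i)

theorem stmt10 (D : ℕ) (hD : 0 < D) (N : Fin D → ℕ) (hN : ∀ i, 0 < N i)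
    (m n : Fin D → ℕ) :
    (∏ i, (1 / (N i : ℝ))) *
      ∑ k ∈ Fintype.piFinset (fun i => Finset.range (N i)),
        ∏ i,
          Real.cos ((n i : ℝ) * (((k i : ℝ) + 1 / 2) * Real.pi / (N i))) *
            Real.cos ((m i : ℝ) * (((k i : ℝ) + 1 / 2) * Real.pi / (N i))) =
    ∏ i,
      ((1 / 2) * aliasDelta (N i) ((m i : ℤ) + (n i : ℤ)) +
        (1 / 2) * aliasDelta (N i) ((m i : ℤ) - (n i : ℤ))) :=
  stmt10_general D N hN m n
end
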